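/- arXiv:2209.07195 — 2 statements merged into one kernel-verified Lean document; each statement's English description precedes it below -/
import Mathlib

section
/- For n ≥ 2 and any pointed space (X, x₀), the n-th homotopy group πₙ(X, x₀) equipped with the whisker topology is a topological group. -/
open scoped Topology unitInterval
open Topology.Homotopy

/-- The set of elements of the `n`-th homotopy group `HomotopyGroup N X x₀` that are represented
by a generalized loop whose image lies in `U`; this is exactly the image of the homomorphism
`πₙ(i) : πₙ(U, x₀) → πₙ(X, x₀)` induced by the inclusion `i : U → X`. -/
def whiskerNbhd (N : Type*) (X : Type*) [TopologicalSpace X] (x₀ : X) (U : Set X) :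
    Set (HomotopyGroup N X x₀) :=
  {p | ∃ f : Ω^ N X x₀, Set.range (⇑f) ⊆ U ∧ ⟦f⟧ = p}

/-- The whisker topology on the homotopy group `HomotopyGroup N X x₀`: the subgroup topology
generated by the cosets `[α] ⬝ πₙ(i)(πₙ(U, x₀))` for `U` an open neighbourhood of `x₀`. -/
def whiskerTopology (N : Type*) [DecidableEq N] [Nonempty N]
    (X : Type*) [TopologicalSpace X] (x₀ : X) :
    TopologicalSpace (HomotopyGroup N X x₀) :=
  TopologicalSpace.generateFrom
    {C | ∃ (p : HomotopyGroup N X x₀) (U : Set X), IsOpen U ∧ x₀ ∈ U ∧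
      C = (fun q => p * q) '' whiskerNbhd N X x₀ U}

section Aux

variable {N : Type*} [DecidableEq N] [Nonempty N] {X : Type*} [TopologicalSpace X] {x₀ : X}
  {U : Set X}

theorem range_transAt (i : N) (f g : Ω^ N X x₀) :
    Set.range ⇑(GenLoop.transAt i f g) ⊆ Set.range ⇑f ∪ Set.range ⇑g := by
  rintro _ ⟨t, rfl⟩
  show (if (t i : ℝ) ≤ 1 / 2
      then f (Function.update t i <| Set.projIcc 0 1 zero_le_one (2 * t i))
      else g (Function.update t i <| Set.projIcc 0 1 zero_le_one (2 * t i - 1))) ∈ _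
  split_ifs
  · exact Or.inl ⟨_, rfl⟩
  · exact Or.inr ⟨_, rfl⟩

theorem range_symmAt (i : N) (f : Ω^ N X x₀) :
    Set.range ⇑(GenLoop.symmAt i f) ⊆ Set.range ⇑f := by
  rintro _ ⟨t, rfl⟩
  exact ⟨_, rfl⟩

theorem whiskerNbhd_one_mem (hU : x₀ ∈ U) : (1 : HomotopyGroup N X x₀) ∈ whiskerNbhd N X x₀ U := by
  refine ⟨GenLoop.const, ?_, HomotopyGroup.one_def.symm⟩
  rintro _ ⟨y, rfl⟩
  exact hU

theorem whiskerNbhd_mul_mem {p q : HomotopyGroup N X x₀} (hp : p ∈ whiskerNbhd N X x₀ U)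
    (hq : q ∈ whiskerNbhd N X x₀ U) : p * q ∈ whiskerNbhd N X x₀ U := by
  obtain ⟨f, hf, rfl⟩ := hp
  obtain ⟨g, hg, rfl⟩ := hq
  refine ⟨GenLoop.transAt (Classical.arbitrary N) g f, ?_, ?_⟩
  · exact (range_transAt _ g f).trans (Set.union_subset hg hf)
  · exact (HomotopyGroup.mul_spec (i := Classical.arbitrary N)).symm

theorem whiskerNbhd_inv_mem {p : HomotopyGroup N X x₀} (hp : p ∈ whiskerNbhd N X x₀ U) :
    p⁻¹ ∈ whiskerNbhd N X x₀ U := by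
  obtain ⟨f, hf, rfl⟩ := hp
  refine ⟨GenLoop.symmAt (Classical.arbitrary N) f, ?_, ?_⟩
  · exact (range_symmAt _ f).trans hf
  · exact (HomotopyGroup.inv_spec (i := Classical.arbitrary N)).symm

theorem whisker_coset_eq {p a : HomotopyGroup N X x₀}
    (ha : a ∈ (fun q => p * q) '' whiskerNbhd N X x₀ U) :
    (fun q => a * q) '' whiskerNbhd N X x₀ U = (fun q => p * q) '' whiskerNbhd N X x₀ U := by
  obtain ⟨h, hh, rfl⟩ := ha
  ext q
  constructor
  · rintro ⟨h', hh', rfl⟩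
    exact ⟨h * h', whiskerNbhd_mul_mem hh hh', (mul_assoc p h h').symm⟩
  · rintro ⟨h', hh', rfl⟩
    refine ⟨h⁻¹ * h', whiskerNbhd_mul_mem (whiskerNbhd_inv_mem hh) hh', ?_⟩
    show p * h * (h⁻¹ * h') = p * h'
    rw [mul_assoc, ← mul_assoc h, mul_inv_cancel, one_mul]

theorem mem_self_coset (hU : x₀ ∈ U) (a : HomotopyGroup N X x₀) :
    a ∈ (fun q => a * q) '' whiskerNbhd N X x₀ U :=
  ⟨1, whiskerNbhd_one_mem hU, mul_one a⟩

end Aux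

/-- For n ≥ 2, the n-th homotopy group with the whisker topology is a topological group. -/
theorem whiskerTopology_topologicalGroup (n : ℕ)
    (X : Type*) [TopologicalSpace X] (x₀ : X) :
    @IsTopologicalGroup (HomotopyGroup (Fin (n + 2)) X x₀)
      (whiskerTopology (Fin (n + 2)) X x₀) _ := by
  have hbasic : ∀ (p : HomotopyGroup (Fin (n + 2)) X x₀) (U : Set X), IsOpen U → x₀ ∈ U →
      IsOpen[whiskerTopology (Fin (n + 2)) X x₀]
        ((fun q => p * q) '' whiskerNbhd (Fin (n + 2)) X x₀ U) := by
    intro p U hUo hUx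
    exact TopologicalSpace.isOpen_generateFrom_of_mem ⟨p, U, hUo, hUx, rfl⟩
  letI := whiskerTopology (Fin (n + 2)) X x₀
  refine { continuous_mul := ?_, continuous_inv := ?_ }
  · -- continuous multiplication
    refine continuous_generateFrom_iff.mpr ?_
    rintro C ⟨p, U, hUo, hUx, rfl⟩
    rw [isOpen_prod_iff]
    intro a b hab
    refine ⟨(fun q => a * q) '' whiskerNbhd (Fin (n + 2)) X x₀ U,
      (fun q => b * q) '' whiskerNbhd (Fin (n + 2)) X x₀ U,
      hbasic a U hUo hUx, hbasic b U hUo hUx, mem_self_coset hUx a, mem_self_coset hUx b, ?_⟩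
    rintro ⟨u, v⟩ ⟨⟨h, hh, rfl⟩, ⟨h', hh', rfl⟩⟩
    have hab' : a * b ∈ (fun q => p * q) '' whiskerNbhd (Fin (n + 2)) X x₀ U := hab
    show a * h * (b * h') ∈ (fun q => p * q) '' whiskerNbhd (Fin (n + 2)) X x₀ U
    rw [← whisker_coset_eq hab']
    exact ⟨h * h', whiskerNbhd_mul_mem hh hh', mul_mul_mul_comm a b h h'⟩
  · -- continuous inversion
    refine continuous_generateFrom_iff.mpr ?_
    rintro C ⟨p, U, hUo, hUx, rfl⟩
    rw [isOpen_iff_forall_mem_open]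
    intro a ha
    refine ⟨(fun q => a * q) '' whiskerNbhd (Fin (n + 2)) X x₀ U, ?_,
      hbasic a U hUo hUx, mem_self_coset hUx a⟩
    rintro _ ⟨h, hh, rfl⟩
    have ha' : a⁻¹ ∈ (fun q => p * q) '' whiskerNbhd (Fin (n + 2)) X x₀ U := ha
    show (a * h)⁻¹ ∈ (fun q => p * q) '' whiskerNbhd (Fin (n + 2)) X x₀ U
    rw [← whisker_coset_eq ha']
    exact ⟨h⁻¹, whiskerNbhd_inv_mem hh, (mul_inv a h).symm⟩
end

section
/- There is no group isomorphism between the countable direct sum ⊕_{ℕ} A and the countable direct product ∏_{ℕ} A, where A = (∏_{p prime} A_p) ⊕ (⊕_c ℚ) with each A_p a nonzero reduced algebraically compact torsion-free abelian group that is not torsion; more concretely: if B = ⊕_{ℕ} ∏_{p} A_p is a direct summand of an algebraically compact abelian group, and each A_p is complete in its ℤ-adic topology with A_p ≠ 0 for infinitely many p, then there is an integer n > 0 with n·∏_p A_p = 0; hence if ∏_p A_p is torsion-free and nonzero, B is not algebraically compact. -/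
open scoped DirectSum

universe u

/-- The subgroup `nA = {n·a : a ∈ A}` of an abelian group `A`. -/
def nMulRange (A : Type u) [AddCommGroup A] (n : ℤ) : AddSubgroup A :=
  AddMonoidHom.range (smulAddHom ℤ A n)

/-- `A` is (Hausdorff and) complete in its ℤ-adic topology: the subgroups `nA` intersect in `0`,
and every ℤ-adically Cauchy sequence converges ℤ-adically. -/
def ZadicComplete (A : Type u) [AddCommGroup A] : Prop :=
  ((⋂ n : ℕ+, (nMulRange A (n : ℤ) : Set A)) = {0}) ∧
  ∀ s : ℕ → A, (∀ n : ℕ+, ∃ K, ∀ j ≥ K, ∀ k ≥ K, s j - s k ∈ nMulRange A (n : ℤ)) →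
    ∃ a : A, ∀ n : ℕ+, ∃ K, ∀ k ≥ K, a - s k ∈ nMulRange A (n : ℤ)

/-- A subgroup `H ≤ B` is pure if every element of `H` divisible by `n` in `B` is divisible
by `n` within `H`. -/
def IsPureSubgroup {B : Type u} [AddCommGroup B] (H : AddSubgroup B) : Prop :=
  ∀ (n : ℤ) (h : B), h ∈ H → (∃ b : B, n • b = h) → ∃ h' ∈ H, n • h' = h

/-- An abelian group `A` is algebraically compact if it is a direct summand of every abelian
group containing it as a pure subgroup. -/
def AlgebraicallyCompact (A : Type u) [AddCommGroup A] : Prop :=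
  ∀ (B : Type u) [AddCommGroup B], ∀ (i : A →+ B), Function.Injective i →
    IsPureSubgroup i.range → ∃ π : B →+ A, π.comp i = AddMonoidHom.id A

lemma key_lemma (G : Type u) [AddCommGroup G]
    (hH : ∀ x : G, (∀ n : ℕ, 0 < n → ∃ y : G, (n : ℤ) • y = x) → x = 0)
    (hU : ∀ n : ℕ, 0 < n → ∃ x : G, ¬(n • x = 0))
    (C : Type u) [AddCommGroup C] (hC : AlgebraicallyCompact C)
    (i : (⨁ _ : ℕ, G) →+ C) (π : C →+ ⨁ _ : ℕ, G)
    (hπ : π.comp i = AddMonoidHom.id _) : False := by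
  classical
  choose a ha using fun k : ℕ => hU (Nat.factorial k) (Nat.factorial_pos k)
  set c : ℕ → C := fun k => i (DirectSum.of (fun _ : ℕ => G) k (a k)) with hc
  set s : ℕ → C := fun m => ∑ k ∈ Finset.range (m + 1), (k.factorial : ℤ) • c k with hs
  have hdvd : ∀ m M : ℕ, m ≤ M → ∃ v : C, ((m + 1).factorial : ℤ) • v = s M - s m := by
    intro m M hm
    refine ⟨∑ k ∈ Finset.Ico (m + 1) (M + 1),
      ((k.factorial / (m + 1).factorial : ℕ) : ℤ) • c k, ?_⟩
    rw [hs]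
    simp only
    rw [← Finset.sum_Ico_eq_sub _ (by omega), Finset.smul_sum]
    refine Finset.sum_congr rfl fun k hk => ?_
    rw [Finset.mem_Ico] at hk
    rw [smul_smul, ← Int.natCast_mul, Nat.mul_div_cancel'
      (Nat.factorial_dvd_factorial hk.1)]
  set e : ℕ → (ℕ → ℤ) := fun m => fun j => if j = m then (1 : ℤ) else 0 with he
  set w : ℕ → C × ℤ × (ℕ → ℤ) :=
    fun m => (s m, (-1, fun j => if j = m then ((m + 1).factorial : ℤ) else 0)) with hw
  set φ : (ℕ →₀ ℤ) →+ C × ℤ × (ℕ → ℤ) :=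
    Finsupp.liftAddHom (fun m => (smulAddHom ℤ _).flip (w m)) with hφdef
  have hφ : ∀ n : ℕ →₀ ℤ, φ n = ∑ m ∈ n.support, n m • w m := by
    intro n; rw [hφdef, Finsupp.liftAddHom_apply]; rfl
  have hφ1 : ∀ n : ℕ →₀ ℤ, (φ n).1 = ∑ m ∈ n.support, n m • s m := by
    intro n; rw [hφ]
    exact (map_sum (AddMonoidHom.fst C (ℤ × (ℕ → ℤ))) (fun m => n m • w m) n.support).trans
      (Finset.sum_congr rfl fun m _ => rfl)
  have hφg : ∀ n : ℕ →₀ ℤ, (φ n).2.1 = - ∑ m ∈ n.support, n m := by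
    intro n; rw [hφ]
    refine (map_sum ((AddMonoidHom.fst ℤ (ℕ → ℤ)).comp (AddMonoidHom.snd C (ℤ × (ℕ → ℤ))))
      (fun m => n m • w m) n.support).trans ?_
    rw [← Finset.sum_neg_distrib]
    refine Finset.sum_congr rfl fun m _ => ?_
    show n m • (-1 : ℤ) = -(n m)
    rw [smul_eq_mul, mul_neg_one]
  have hφx : ∀ (n : ℕ →₀ ℤ) (k : ℕ), (φ n).2.2 k = n k * ((k + 1).factorial : ℤ) := by
    intro n k
    rw [hφ]
    have h1 : ∀ m ∈ n.support,
        (n m • w m).2.2 k = if k = m then n m * ((m + 1).factorial : ℤ) else 0 := by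
      intro m _
      show n m • (if k = m then ((m + 1).factorial : ℤ) else 0) = _
      rw [smul_eq_mul, mul_ite, mul_zero]
    have h2 : ∑ m ∈ n.support, (if k = m then n m * ((m + 1).factorial : ℤ) else 0)
        = n k * ((k + 1).factorial : ℤ) := by
      rw [Finset.sum_ite_eq]
      by_cases hk : k ∈ n.support
      · rw [if_pos hk]
      · rw [if_neg hk, Finsupp.notMem_support_iff.mp hk, zero_mul]
    exact ((map_sum ((Pi.evalAddMonoidHom (fun _ : ℕ => ℤ) k).comp
      ((AddMonoidHom.snd ℤ (ℕ → ℤ)).comp (AddMonoidHom.snd C (ℤ × (ℕ → ℤ)))))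
      (fun m => n m • w m) n.support).trans ((Finset.sum_congr rfl h1).trans h2) : _)
  set R : AddSubgroup (C × ℤ × (ℕ → ℤ)) := φ.range with hR
  set ι : C →+ (C × ℤ × (ℕ → ℤ)) ⧸ R :=
    (QuotientAddGroup.mk' R).comp (AddMonoidHom.inl C (ℤ × (ℕ → ℤ))) with hι
  have hιapp : ∀ x : C, ι x = QuotientAddGroup.mk' R (x, 0) := fun _ => rfl
  have hinj : Function.Injective ι := by
    rw [injective_iff_map_eq_zero]
    intro x hx
    have hmem : ((x, 0) : C × ℤ × (ℕ → ℤ)) ∈ R := by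
      have h2 : ((x, 0) : C × ℤ × (ℕ → ℤ)) ∈ (QuotientAddGroup.mk' R).ker := hx
      rwa [QuotientAddGroup.ker_mk'] at h2
    obtain ⟨n, hn⟩ := hmem
    have hnz : n = 0 := by
      ext m
      have h1 := hφx n m
      rw [hn] at h1
      have h1' : (0 : ℤ) = n m * ((m + 1).factorial : ℤ) := h1
      rcases mul_eq_zero.mp h1'.symm with h | h
      · exact h
      · exact absurd (Int.natCast_eq_zero.mp h) (m + 1).factorial_ne_zero
    rw [hnz, map_zero] at hn
    exact (congrArg Prod.fst hn).symm
  have hpure : IsPureSubgroup ι.range := by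
    rintro N h hmem ⟨b, hb⟩
    obtain ⟨x, rfl⟩ := hmem
    obtain ⟨p', rfl⟩ := QuotientAddGroup.mk'_surjective R b
    have hmemR : N • p' - (x, 0) ∈ R := by
      have h' : QuotientAddGroup.mk' R (N • p' - (x, 0)) = 0 := by
        rw [map_sub, map_zsmul, hb]
        exact sub_eq_zero_of_eq rfl
      have h2 : N • p' - (x, 0) ∈ (QuotientAddGroup.mk' R).ker := h'
      rwa [QuotientAddGroup.ker_mk'] at h2
    obtain ⟨n, hn⟩ := hmemR
    have hEx : ∀ m : ℕ, N * p'.2.2 m = n m * ((m + 1).factorial : ℤ) := by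
      intro m
      have h1 := hφx n m
      rw [hn] at h1
      have h2 : (N • p' - (x, 0)).2.2 m = N * p'.2.2 m := by
        show N • p'.2.2 m - 0 = N * p'.2.2 m
        rw [sub_zero, smul_eq_mul]
      rw [h2] at h1
      exact h1
    have hEg : ∑ m ∈ n.support, n m = -(N * p'.2.1) := by
      have h1 := hφg n
      rw [hn] at h1
      have h2 : (N • p' - (x, 0)).2.1 = N * p'.2.1 := by
        show N • p'.2.1 - 0 = N * p'.2.1
        rw [sub_zero, smul_eq_mul]
      rw [h2] at h1
      omega
    have hE1 : N • p'.1 - x = ∑ m ∈ n.support, n m • s m := by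
      have h1 := hφ1 n
      rw [hn] at h1
      have h2 : (N • p' - (x, 0)).1 = N • p'.1 - x := rfl
      rw [h2] at h1
      exact h1
    set M := n.support.sup id with hM
    choose v hv using fun m : ℕ => hdvd (min m M) M (min_le_right m M)
    have hsum : ∑ m ∈ n.support, n m • s m
        = N • ((-(p'.2.1)) • s M - ∑ m ∈ n.support, p'.2.2 m • v m) := by
      have step : ∀ m ∈ n.support, n m • s m = n m • s M - N • (p'.2.2 m • v m) := by
        intro m hm
        have hmM : m ≤ M := Finset.le_sup (f := id) hm
        have hvm : ((m + 1).factorial : ℤ) • v m = s M - s m := by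
          have h3 := hv m
          rwa [min_eq_left hmM] at h3
        have h4 : n m • (s M - s m) = N • (p'.2.2 m • v m) := by
          rw [← hvm, smul_smul, ← hEx m, mul_smul]
        rw [smul_sub] at h4
        rw [← h4]; abel
      rw [Finset.sum_congr rfl step, Finset.sum_sub_distrib, ← Finset.sum_smul,
        hEg, ← Finset.smul_sum, smul_sub]
      congr 1
      rw [smul_smul, mul_neg]
    have hx : x = N • (p'.1 + p'.2.1 • s M + ∑ m ∈ n.support, p'.2.2 m • v m) := by
      have h2 := hE1
      rw [hsum] at h2
      have h3 : x = N • (p'.1 - ((-(p'.2.1)) • s M - ∑ m ∈ n.support, p'.2.2 m • v m)) := by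
        rw [smul_sub, ← h2]
        abel
      rw [h3]
      congr 1
      rw [neg_smul]
      abel
    refine ⟨ι (p'.1 + p'.2.1 • s M + ∑ m ∈ n.support, p'.2.2 m • v m), ⟨_, rfl⟩, ?_⟩
    rw [← map_zsmul ι, ← hx]
  obtain ⟨ρ, hρ⟩ := hC _ ι hinj hpure
  have hρι : ∀ y : C, ρ (ι y) = y := fun y => DFunLike.congr_fun hρ y
  have hwmem : ∀ m : ℕ, w m ∈ R := by
    intro m
    refine ⟨Finsupp.single m 1, ?_⟩
    rw [hφ, Finsupp.support_single_ne_zero _ one_ne_zero, Finset.sum_singleton,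
      Finsupp.single_eq_same, one_smul]
  have key_eq : ∀ m : ℕ, ((s m, 0) : C × ℤ × (ℕ → ℤ))
      = w m + ((0, 1, 0) - ((m + 1).factorial : ℤ) • (0, 0, e m)) := by
    intro m
    refine Prod.ext ?_ (Prod.ext ?_ ?_)
    · show s m = s m + (0 - ((m + 1).factorial : ℤ) • 0)
      simp
    · show (0 : ℤ) = -1 + (1 - ((m + 1).factorial : ℤ) • 0)
      simp
    · funext j
      show (0 : ℤ) = (if j = m then ((m + 1).factorial : ℤ) else 0)
          + (0 - ((m + 1).factorial : ℤ) • (if j = m then (1 : ℤ) else 0))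
      rw [smul_eq_mul, mul_ite, mul_one, mul_zero]
      by_cases hj : j = m <;> simp [hj]
  have hg : ∀ m : ℕ, ρ (QuotientAddGroup.mk' R (0, 1, 0)) - s m
      = ((m + 1).factorial : ℤ) • ρ (QuotientAddGroup.mk' R (0, 0, e m)) := by
    intro m
    have h1 : ι (s m) = QuotientAddGroup.mk' R (0, 1, 0)
        - ((m + 1).factorial : ℤ) • QuotientAddGroup.mk' R (0, 0, e m) := by
      rw [hιapp, key_eq m, map_add, map_sub, map_zsmul]
      have hz : QuotientAddGroup.mk' R (w m) = 0 := by
        rw [← QuotientAddGroup.ker_mk' (N := R)] at hwmem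
        exact hwmem m
      rw [hz]
      abel
    have h2 := congrArg ρ h1
    rw [hρι, map_sub, map_zsmul] at h2
    rw [h2]; abel
  set y := π (ρ (QuotientAddGroup.mk' R (0, 1, 0))) with hy
  obtain ⟨k, hk⟩ := Infinite.exists_notMem_finset y.support
  have hyk : y k = 0 := DFinsupp.notMem_support_iff.mp hk
  have hπi : ∀ b, π (i b) = b := fun b => DFunLike.congr_fun hπ b
  have hps : ∀ m : ℕ, k ≤ m → (π (s m)) k = (k.factorial : ℤ) • a k := by
    intro m hm
    simp only [hs]
    rw [map_sum]
    have h1 : ∀ j ∈ Finset.range (m + 1),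
        π ((j.factorial : ℤ) • c j)
          = (j.factorial : ℤ) • DirectSum.of (fun _ : ℕ => G) j (a j) := by
      intro j _
      rw [map_zsmul]
      simp only [hc]
      rw [hπi]
    rw [Finset.sum_congr rfl h1, DFinsupp.finset_sum_apply]
    rw [Finset.sum_eq_single k]
    · rw [DFinsupp.smul_apply, DirectSum.of_eq_same]
    · intro j _ hj
      rw [DFinsupp.smul_apply, DirectSum.of_eq_of_ne _ _ _ hj.symm, smul_zero]
    · intro hkk
      exact absurd (Finset.mem_range.mpr (by omega)) hkk
  have hzero : (k.factorial : ℤ) • a k = 0 := by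
    apply hH
    intro n hn
    have h1 : y k - (π (s (k + n))) k
        = ((k + n + 1).factorial : ℤ)
            • ((π (ρ (QuotientAddGroup.mk' R (0, 0, e (k + n))))) k) := by
      rw [hy, ← DFinsupp.sub_apply, ← map_sub π, hg (k + n), map_zsmul, DFinsupp.smul_apply]
    rw [hyk, hps (k + n) (by omega), zero_sub] at h1
    obtain ⟨t, ht⟩ := Nat.dvd_factorial hn (show n ≤ k + n + 1 by omega)
    refine ⟨(t : ℤ) • (-((π (ρ (QuotientAddGroup.mk' R (0, 0, e (k + n))))) k)), ?_⟩
    rw [smul_smul, ← Int.natCast_mul, ← ht, smul_neg, ← h1, neg_neg]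
  have h2 := ha k
  rw [← natCast_zsmul] at h2
  exact h2 hzero

/-- Let `A p` (p prime) be abelian groups, each complete in its ℤ-adic topology, with `A p ≠ 0`
for infinitely many `p`, and let `B = ⊕_ℕ ∏_p A p`. Then: (1) if `B` is a direct summand of an
algebraically compact abelian group, there is `n > 0` with `n • ∏_p A p = 0`; hence (2) if
`∏_p A p` is torsion-free and nonzero, `B` is not algebraically compact. -/
theorem directSum_prod_not_algebraicallyCompact
    (A : Nat.Primes → Type u) [∀ p, AddCommGroup (A p)]
    (hcomplete : ∀ p, ZadicComplete (A p))
    (hinf : {p : Nat.Primes | Nontrivial (A p)}.Infinite) :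
    (∀ (C : Type u) [AddCommGroup C], AlgebraicallyCompact C →
      ∀ (i : (⨁ _ : ℕ, (∀ p, A p)) →+ C) (π : C →+ (⨁ _ : ℕ, (∀ p, A p))),
        π.comp i = AddMonoidHom.id (⨁ _ : ℕ, (∀ p, A p)) →
        ∃ n : ℕ, 0 < n ∧ ∀ x : ∀ p, A p, n • x = 0) ∧
    ((∀ (x : ∀ p, A p), x ≠ 0 → ∀ n : ℕ, 0 < n → n • x ≠ 0) → Nontrivial (∀ p, A p) →
      ¬ AlgebraicallyCompact (⨁ _ : ℕ, (∀ p, A p))) := by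
  classical
  have hH : ∀ x : (∀ p, A p), (∀ n : ℕ, 0 < n → ∃ y, (n : ℤ) • y = x) → x = 0 := by
    intro x hx
    funext p
    have h1 := (hcomplete p).1
    have h2 : x p ∈ ⋂ n : ℕ+, (nMulRange (A p) (n : ℤ) : Set (A p)) := by
      refine Set.mem_iInter.mpr fun n => ?_
      obtain ⟨y, hy⟩ := hx n n.2
      exact ⟨y p, by rw [← hy]; rfl⟩
    rw [h1] at h2
    exact h2
  have part1 : ∀ (C : Type u) [AddCommGroup C], AlgebraicallyCompact C →
      ∀ (i : (⨁ _ : ℕ, (∀ p, A p)) →+ C) (π : C →+ (⨁ _ : ℕ, (∀ p, A p))),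
        π.comp i = AddMonoidHom.id (⨁ _ : ℕ, (∀ p, A p)) →
        ∃ n : ℕ, 0 < n ∧ ∀ x : ∀ p, A p, n • x = 0 := by
    intro C _ hC i π hπ
    by_cases hb : ∃ n : ℕ, 0 < n ∧ ∀ x : ∀ p, A p, n • x = 0
    · exact hb
    · push_neg at hb
      exact (key_lemma (∀ p, A p) hH (fun n hn => by
        obtain ⟨x, hx⟩ := hb n hn
        exact ⟨x, hx⟩) C hC i π hπ).elim
  refine ⟨part1, fun htf hnt hAC => ?_⟩
  obtain ⟨x, y, hxy⟩ := hnt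
  obtain ⟨n, hn, hzero⟩ := part1 _ hAC (AddMonoidHom.id _) (AddMonoidHom.id _)
    (AddMonoidHom.id_comp _)
  exact htf (x - y) (sub_ne_zero.mpr hxy) n hn (hzero _)
end
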